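/- arXiv:0811.0056 — 4 statements merged into one kernel-verified Lean document; each statement's English description precedes it below -/
import Mathlib

section
/- There exists a bounded linear operator S̃ on ℓ²(X×ℤ) such that S̃ e_{(x,n)} = (ℒ(1)(x))^{-1/2} Σ_{y ∈ T⁻¹({x})} e_{(y,n+1)} for every (x,n) ∈ X×ℤ, and any such operator S̃ is an isometry, i.e. S̃*S̃ = 1. -/
open Classical

noncomputable section

/-- `ℓ²(X×ℤ)`: the Hilbert space of square-summable complex families indexed by `X × ℤ`. -/
abbrev l2Z (X : Type*) : Type _ := lp (fun _ : X × ℤ => ℂ) 2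

/-- The orthonormal basis vector `e_{(x,n)}` of `ℓ²(X×ℤ)`. -/
def e {X : Type*} (p : X × ℤ) : l2Z X := lp.single 2 p 1

end

/-!
The vector `S̃ e_{(x,n)}` is the normalized sum of the basis vectors indexed by
`T⁻¹{x} × {n+1}`, the fibre of `(y, m) ↦ (T y, m - 1)` over `(x, n)`. These fibres are pairwise
disjoint, nonempty (`T` is onto) and finite (a fibre of a covering map is discrete, and closed
in the compact space `X`), so the vectors `S̃ e_{(x,n)}` form an orthonormal family. An
operator on `ℓ²` is determined by its values on the standard basis, so `S̃` is the linear
isometry defined by this family, and an isometry satisfies `S̃* S̃ = 1`.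
-/

open Function
open scoped InnerProductSpace lp

section Orthonormal

variable {𝕜 E ι κ : Type*} [RCLike 𝕜] [NormedAddCommGroup E] [InnerProductSpace 𝕜 E]
  {v : κ → E}

theorem Orthonormal.inner_sum_sum (hv : Orthonormal 𝕜 v) (s t : Finset κ) :
    ⟪∑ j ∈ s, v j, ∑ j ∈ t, v j⟫_𝕜 = (s ∩ t).card := by
  simp [sum_inner, inner_sum, orthonormal_iff_ite.mp hv, Finset.inter_comm]

theorem Orthonormal.orthonormal_normalized_sum (hv : Orthonormal 𝕜 v) {s : ι → Finset κ}
    (hdisj : Pairwise (Disjoint on s)) (hne : ∀ i, (s i).Nonempty) :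
    Orthonormal 𝕜 fun i ↦ (((√(s i).card)⁻¹ : ℝ) : 𝕜) • ∑ j ∈ s i, v j := by
  rw [orthonormal_iff_ite]
  intro i k
  simp only [inner_smul_left, inner_smul_right, hv.inner_sum_sum, RCLike.conj_ofReal]
  split_ifs with hik
  · subst hik
    have hpos : (0 : ℝ) < (s i).card := by exact_mod_cast (hne i).card_pos
    rw [Finset.inter_self]
    norm_cast
    field_simp
    rw [Real.sq_sqrt hpos.le]
  · simp [Finset.disjoint_iff_inter_eq_empty.mp (hdisj hik)]

theorem Orthonormal.orthonormal_normalized_finsum_fiber (hv : Orthonormal 𝕜 v) {π : κ → ι} (hfin : ∀ i, (π ⁻¹' {i}).Finite) (hne : ∀ i, (π ⁻¹' {i}).Nonempty) :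
    Orthonormal 𝕜 fun i ↦ (((√(Nat.card (π ⁻¹' {i})))⁻¹ : ℝ) : 𝕜) • ∑ᶠ j ∈ π ⁻¹' {i}, v j := by
  have hdisj : Pairwise (Disjoint on fun i ↦ (hfin i).toFinset) := fun i k hik ↦
    Finset.disjoint_left.2 fun j hi hk ↦ hik (by simp_all)
  convert hv.orthonormal_normalized_sum hdisj fun i ↦ (hfin i).toFinset_nonempty.2 (hne i)
    using 5 with i
  · rw [Nat.card_coe_set_eq, Set.ncard_eq_toFinset_card _ (hfin i)]
  · exact finsum_mem_eq_finite_toFinset_sum _ (hfin i)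

end Orthonormal

theorem lp.ext_continuousLinearMap_single_one {𝕜 ι F : Type*} [RCLike 𝕜] [DecidableEq ι]
    [NormedAddCommGroup F] [NormedSpace 𝕜 F] {f g : ℓ²(ι, 𝕜) →L[𝕜] F}
    (h : ∀ i, f (lp.single 2 i 1) = g (lp.single 2 i 1)) : f = g :=
  lp.ext_continuousLinearMap ENNReal.ofNat_ne_top fun i ↦ ContinuousLinearMap.ext_ring (h i)

section lp

variable {𝕜 E ι : Type*} [RCLike 𝕜] [NormedAddCommGroup E] [InnerProductSpace 𝕜 E]
  [CompleteSpace E] [DecidableEq ι]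

theorem lp.orthonormal_single : Orthonormal 𝕜 fun i : ι ↦ lp.single 2 i (1 : 𝕜) := by
  rw [orthonormal_iff_ite]
  intro i j
  rw [lp.inner_single_left, lp.single_apply]
  split_ifs <;> simp_all

theorem Orthonormal.linearIsometry_single_one {w : ι → E} (hw : Orthonormal 𝕜 w) (i : ι) :
    hw.orthogonalFamily.linearIsometry (lp.single 2 i 1) = w i := by
  simp [LinearIsometry.toSpanSingleton]

theorem Orthonormal.adjoint_comp_self_eq_one {w : ι → E} (hw : Orthonormal 𝕜 w)
    {S : ℓ²(ι, 𝕜) →L[𝕜] E} (hS : ∀ i, S (lp.single 2 i 1) = w i) :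
    ContinuousLinearMap.adjoint S ∘L S = 1 := by
  have hSL : S = hw.orthogonalFamily.linearIsometry.toContinuousLinearMap :=
    lp.ext_continuousLinearMap_single_one fun i ↦ by
      rw [hS, LinearIsometry.coe_toContinuousLinearMap, hw.linearIsometry_single_one]
  rw [hSL, ← ContinuousLinearMap.norm_map_iff_adjoint_comp_self]
  exact LinearIsometry.norm_map _

end lp

theorem IsCoveringMap.finite_preimage_singleton {E X : Type*} [TopologicalSpace E]
    [TopologicalSpace X] [CompactSpace E] [T1Space X] {f : E → X} (hf : IsCoveringMap f)
    (x : X) : (f ⁻¹' {x}).Finite :=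
  have := (hf x).discreteTopology_fiber
  (isClosed_singleton.preimage hf.continuous).isCompact.finite
    (isDiscrete_iff_discreteTopology.mpr this)

theorem preimage_prodMap_sub_one_singleton {X Y : Type*} (T : X → Y) (y : Y) (n : ℤ) :
    Prod.map T (fun m : ℤ ↦ m - 1) ⁻¹' {(y, n)} = (·, n + 1) '' (T ⁻¹' {y}) := by
  ext ⟨x, m⟩
  simp only [Set.mem_preimage, Prod.map_apply, Set.mem_singleton_iff, Prod.mk.injEq,
    Set.mem_image, sub_eq_iff_eq_add]
  grind

theorem Orthonormal.orthonormal_normalized_finsum_shifted_fiber {𝕜 E X Y : Type*} [RCLike 𝕜]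
    [NormedAddCommGroup E] [InnerProductSpace 𝕜 E] {v : X × ℤ → E} (hv : Orthonormal 𝕜 v)
    {T : X → Y} (hfin : ∀ y, (T ⁻¹' {y}).Finite) (hne : ∀ y, (T ⁻¹' {y}).Nonempty) :
    Orthonormal 𝕜 fun p : Y × ℤ ↦
      (((√(Nat.card (T ⁻¹' {p.1})))⁻¹ : ℝ) : 𝕜) • ∑ᶠ x ∈ T ⁻¹' {p.1}, v (x, p.2 + 1) := by
  have hinj (n : ℤ) := Prod.mk_left_injective (α := X) (n + 1)
  have hfiber := preimage_prodMap_sub_one_singleton T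
  convert hv.orthonormal_normalized_finsum_fiber (π := Prod.map T fun m : ℤ ↦ m - 1)
    (fun (y, n) ↦ hfiber y n ▸ (hfin y).image _) (fun (y, n) ↦ hfiber y n ▸ (hne y).image _)
    using 1
  funext ⟨y, n⟩
  rw [hfiber, finsum_mem_image (hinj n).injOn, Nat.card_image_of_injective (hinj n)]

open ContinuousLinearMap in
/-- Let `X` be a compact Hausdorff space and `T : X → X` a covering map.
There exists a bounded operator `S̃` on `ℓ²(X×ℤ)` such that
`S̃ e_{(x,n)} = (ℒ(1)(x))^{-1/2} ∑_{y ∈ T⁻¹({x})} e_{(y,n+1)}` for every `(x,n)`, and any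
such operator is an isometry: `S̃* S̃ = 1`. -/
theorem exists_isometry_S_tilde {X : Type*} [TopologicalSpace X] [CompactSpace X]
    [T2Space X] (T : X → X) (hT : IsCoveringMap T) (hTsurj : Function.Surjective T) :
    (∃ St : l2Z X →L[ℂ] l2Z X, ∀ (x : X) (n : ℤ),
        St (e (x, n)) = (((Real.sqrt (Nat.card (T ⁻¹' {x})))⁻¹ : ℝ) : ℂ) •
          ∑ᶠ y ∈ T ⁻¹' {x}, e (y, n + 1)) ∧
    ∀ St : l2Z X →L[ℂ] l2Z X,
      (∀ (x : X) (n : ℤ), St (e (x, n)) = (((Real.sqrt (Nat.card (T ⁻¹' {x})))⁻¹ : ℝ) : ℂ) •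
          ∑ᶠ y ∈ T ⁻¹' {x}, e (y, n + 1)) →
      (adjoint St) ∘L St = 1 := by
  have he : Orthonormal ℂ (e : X × ℤ → l2Z X) := lp.orthonormal_single
  have hw := he.orthonormal_normalized_finsum_shifted_fiber
    hT.finite_preimage_singleton fun x ↦ hTsurj.nonempty_preimage.2 (Set.singleton_nonempty x)
  exact ⟨⟨hw.orthogonalFamily.linearIsometry.toContinuousLinearMap,
    fun x n ↦ hw.linearIsometry_single_one (x, n)⟩,
    fun St hSt ↦ hw.adjoint_comp_self_eq_one fun p ↦ hSt p.1 p.2⟩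
end

section
/- For every complex number z with |z| = 1 there exists a unitary operator U_z on ℓ²(X×ℤ) such that U_z e_{(x,n)} = zⁿ e_{(x,n)} for all (x,n) ∈ X×ℤ; moreover U_z M̃_f U_z* = M̃_f for every continuous f : X → ℂ, and U_z S̃ U_z* = z·S̃. -/
/-! `U_z` is the diagonal operator with entries `zⁿ` of modulus one, hence unitary with inverse
(and adjoint) the diagonal operator with entries `z⁻ⁿ`. Conjugation by `U_z` therefore fixes every
operator that is diagonal in the basis `e`, such as `M̃_f`, and multiplies by `z` every operator
that maps each `e (x, n)` into the span of the `e (y, n + 1)`, such as `S̃`. Equalities of bounded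
operators are checked on the basis, whose span is dense. -/

open Classical

open ContinuousLinearMap

namespace lp

variable {ι 𝕜 : Type*} [NormedField 𝕜] {E : ι → Type*} [∀ i, NormedAddCommGroup (E i)]
  [∀ i, NormedSpace 𝕜 (E i)] {p : ENNReal} [Fact (1 ≤ p)]

variable (E p) in
def diagonalUnitary (w : ι → 𝕜) (hw : ∀ i, ‖w i‖ = 1) : lp E p ≃ₗᵢ[𝕜] lp E p where
  toFun f := ⟨fun i => w i • f i,
    (lp.memℓp f).mono' fun i => by simp [norm_smul, hw]⟩
  invFun f := ⟨fun i => (w i)⁻¹ • f i,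
    (lp.memℓp f).mono' fun i => by simp [norm_smul, hw]⟩
  map_add' f g := lp.ext <| funext fun i => smul_add (w i) (f i) (g i)
  map_smul' c f := lp.ext <| funext fun i => smul_comm (w i) c (f i)
  left_inv f := lp.ext <| funext fun i =>
    inv_smul_smul₀ (norm_ne_zero_iff.mp (by simp [hw])) (f i)
  right_inv f := lp.ext <| funext fun i =>
    smul_inv_smul₀ (norm_ne_zero_iff.mp (by simp [hw])) (f i)
  norm_map' f := by
    have hp : p ≠ 0 := (zero_lt_one.trans_le (Fact.out : 1 ≤ p)).ne'
    exact le_antisymm (norm_mono hp fun i => by simp [norm_smul, hw])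
      (norm_mono hp fun i => by simp [norm_smul, hw])

@[simp]
lemma diagonalUnitary_apply (w : ι → 𝕜) (hw : ∀ i, ‖w i‖ = 1) (f : lp E p) (i : ι) :
    diagonalUnitary E p w hw f i = w i • f i :=
  rfl

lemma diagonalUnitary_single [DecidableEq ι] (w : ι → 𝕜) (hw : ∀ i, ‖w i‖ = 1) (i : ι)
    (x : E i) :
    diagonalUnitary E p w hw (lp.single p i x) = w i • lp.single p i x := by
  ext j
  by_cases h : j = i
  · subst h; simp
  · simp [Pi.single_eq_of_ne h]

end lp

theorem apply_finsum_mem_eq_smul {R M F α : Type*} [Monoid R] [AddCommMonoid M]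
    [DistribMulAction R M] [FunLike F M M] [AddMonoidHomClass F M M] (L : F) (c : R)
    {f : α → M} {s : Set α} (h : ∀ i ∈ s, L (f i) = c • f i) :
    L (∑ᶠ i ∈ s, f i) = c • ∑ᶠ i ∈ s, f i :=
  finsum_mem_induction (fun v => L v = c • v) (by simp)
    (fun v w hv hw => by simp only [map_add, hv, hw, smul_add]) h

theorem LinearIsometryEquiv.comp_comp_adjoint_eq_of_comp_eq {𝕜 H : Type*} [RCLike 𝕜]
    [NormedAddCommGroup H] [InnerProductSpace 𝕜 H] [CompleteSpace H] (U : H ≃ₗᵢ[𝕜] H)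
    {A B : H →L[𝕜] H} (h : (U : H →L[𝕜] H) ∘L A = B ∘L U) :
    (U : H →L[𝕜] H) ∘L A ∘L adjoint (U : H →L[𝕜] H) = B := by
  rw [U.adjoint_eq_symm, ← comp_assoc, h, comp_assoc]
  ext x
  simp

theorem l2Z.ext_e {X F : Type*} [AddCommMonoid F] [Module ℂ F] [TopologicalSpace F]
    [T2Space F] {A B : l2Z X →L[ℂ] F} (h : ∀ p, A (e p) = B (e p)) : A = B := by
  refine lp.ext_continuousLinearMap ENNReal.ofNat_ne_top fun p => ext fun c => ?_
  have hc : lp.single 2 p c = c • e p := by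
    rw [e, ← lp.single_smul, smul_eq_mul, mul_one]
  simp only [comp_apply, lp.singleContinuousLinearMap_apply, hc, map_smul, h]

section Gauge

variable {X : Type*} {z : ℂ} (hz : ‖z‖ = 1)
include hz

variable (X) in
noncomputable def gaugeUnitary : l2Z X ≃ₗᵢ[ℂ] l2Z X :=
  lp.diagonalUnitary _ 2 (fun p => z ^ p.2) fun p => by rw [norm_zpow, hz, one_zpow]

lemma gaugeUnitary_e (p : X × ℤ) : gaugeUnitary X hz (e p) = z ^ p.2 • e p :=
  lp.diagonalUnitary_single _ _ _ _

lemma gaugeUnitary_conj_of_diagonal {A : l2Z X →L[ℂ] l2Z X} {c : X × ℤ → ℂ}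
    (hA : ∀ p, A (e p) = c p • e p) :
    (gaugeUnitary X hz : l2Z X →L[ℂ] l2Z X) ∘L A ∘L
      adjoint (gaugeUnitary X hz : l2Z X →L[ℂ] l2Z X) = A := by
  refine (gaugeUnitary X hz).comp_comp_adjoint_eq_of_comp_eq (l2Z.ext_e fun p => ?_)
  simp only [comp_apply, ContinuousLinearEquiv.coe_coe, LinearIsometryEquiv.coe_coe, hA, map_smul,
    gaugeUnitary_e, smul_comm (c p)]

lemma gaugeUnitary_conj_of_raises_degree {A : l2Z X →L[ℂ] l2Z X}
    (hA : ∀ x n, gaugeUnitary X hz (A (e (x, n))) = z ^ (n + 1) • A (e (x, n))) :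
    (gaugeUnitary X hz : l2Z X →L[ℂ] l2Z X) ∘L A ∘L
      adjoint (gaugeUnitary X hz : l2Z X →L[ℂ] l2Z X) = z • A := by
  refine (gaugeUnitary X hz).comp_comp_adjoint_eq_of_comp_eq (l2Z.ext_e fun ⟨x, n⟩ => ?_)
  have hz0 : z ≠ 0 := norm_ne_zero_iff.mp (hz.trans_ne one_ne_zero)
  simp only [comp_apply, ContinuousLinearEquiv.coe_coe, LinearIsometryEquiv.coe_coe, hA,
    gaugeUnitary_e, smul_apply, map_smul, smul_smul, zpow_add_one₀ hz0]

end Gauge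

open ContinuousLinearMap in
theorem exists_gauge_unitary_general {X : Type*} [TopologicalSpace X]
    (T : X → X)
    (St : l2Z X →L[ℂ] l2Z X)
    (hSt : ∀ (x : X) (n : ℤ), St (e (x, n)) =
      (((Real.sqrt (Nat.card (T ⁻¹' {x})))⁻¹ : ℝ) : ℂ) • ∑ᶠ y ∈ T ⁻¹' {x}, e (y, n + 1)) :
    ∀ z : ℂ, ‖z‖ = 1 →
      ∃ U : l2Z X →L[ℂ] l2Z X,
        ((adjoint U) ∘L U = 1 ∧ U ∘L (adjoint U) = 1) ∧
        (∀ p : X × ℤ, U (e p) = (z ^ p.2) • e p) ∧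
        (∀ f : C(X, ℂ), ∀ Mf : l2Z X →L[ℂ] l2Z X,
          (∀ p : X × ℤ, Mf (e p) = f p.1 • e p) → U ∘L Mf ∘L (adjoint U) = Mf) ∧
        U ∘L St ∘L (adjoint U) = z • St := by
  intro z hz
  refine ⟨gaugeUnitary X hz, by simp [one_def], gaugeUnitary_e hz,
    fun f Mf hMf => gaugeUnitary_conj_of_diagonal hz hMf,
    gaugeUnitary_conj_of_raises_degree hz fun x n => ?_⟩
  rw [hSt, map_smul, smul_comm,
    apply_finsum_mem_eq_smul _ (z ^ (n + 1)) fun y _ => gaugeUnitary_e hz (y, n + 1)]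

open ContinuousLinearMap in
/-- Let `X` be a compact Hausdorff space, `T : X → X` a covering map and
`S̃` the bounded operator on `ℓ²(X×ℤ)` with
`S̃ e_{(x,n)} = (ℒ(1)(x))^{-1/2} ∑_{y ∈ T⁻¹({x})} e_{(y,n+1)}`. For every `z ∈ ℂ` with
`|z| = 1` there is a unitary `U_z` on `ℓ²(X×ℤ)` with `U_z e_{(x,n)} = zⁿ e_{(x,n)}`;
moreover `U_z M̃_f U_z* = M̃_f` for every continuous `f : X → ℂ`, and
`U_z S̃ U_z* = z·S̃`. -/
theorem exists_gauge_unitary {X : Type*} [TopologicalSpace X] [CompactSpace X] [T2Space X]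
    (T : X → X) (hT : IsCoveringMap T) (hTsurj : Function.Surjective T)
    (St : l2Z X →L[ℂ] l2Z X)
    (hSt : ∀ (x : X) (n : ℤ), St (e (x, n)) =
      (((Real.sqrt (Nat.card (T ⁻¹' {x})))⁻¹ : ℝ) : ℂ) • ∑ᶠ y ∈ T ⁻¹' {x}, e (y, n + 1)) :
    ∀ z : ℂ, ‖z‖ = 1 →
      ∃ U : l2Z X →L[ℂ] l2Z X,
        ((adjoint U) ∘L U = 1 ∧ U ∘L (adjoint U) = 1) ∧
        (∀ p : X × ℤ, U (e p) = (z ^ p.2) • e p) ∧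
        (∀ f : C(X, ℂ), ∀ Mf : l2Z X →L[ℂ] l2Z X,
          (∀ p : X × ℤ, Mf (e p) = f p.1 • e p) → U ∘L Mf ∘L (adjoint U) = Mf) ∧
        U ∘L St ∘L (adjoint U) = z • St :=
  exists_gauge_unitary_general T St hSt
end

section
/- For all continuous functions f, g : X → ℂ, all natural numbers k, l, and every (x,n) ∈ X×ℤ, one has ⟨M̃_f S̃^k (S̃*)^l M̃_g e_{(x,n)}, e_{(x,n)}⟩ = δ_{k,l}·f(x)·(I_k(x))^{-1}·g(x), where δ_{k,l} is the Kronecker symbol. -/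
open Classical

noncomputable section

/-- `I_k(x) = ∏_{j=1}^{k} ℒ(1)(T^j(x))`, where `ℒ(1)(x) = card (T⁻¹({x}))`
(with `I_0 = 1`). -/
def Ik {X : Type*} (T : X → X) (k : ℕ) (x : X) : ℝ :=
  ∏ j ∈ Finset.range k, (Nat.card (T ⁻¹' {T^[j + 1] x}) : ℝ)

end

/-!
`S̃*` sends `e_{(x,n)}` to `ℒ(1)(Tx)^{-1/2} e_{(Tx,n-1)}`, hence
`(S̃*)^l e_{(x,n)} = I_l(x)^{-1/2} e_{(T^l x, n-l)}`. Moving `M̃_f` and `S̃^k` to the other side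
of the inner product as adjoints turns the matrix entry into `f(x) g(x)` times the inner product
of `(S̃*)^k e_{(x,n)}` and `(S̃*)^l e_{(x,n)}`, which vanishes for `k ≠ l` because the
`ℤ`-coordinates differ, and equals `I_k(x)⁻¹` for `k = l`.
-/

open scoped InnerProductSpace ComplexConjugate

section BasisVectors

open ContinuousLinearMap

variable {X : Type*}

lemma inner_e_left (p : X × ℤ) (u : l2Z X) : ⟪e p, u⟫_ℂ = (u : X × ℤ → ℂ) p := by
  simp [e, lp.inner_single_left, RCLike.inner_apply]

lemma inner_e_e (p q : X × ℤ) : ⟪e p, e q⟫_ℂ = if p = q then 1 else 0 := by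
  rw [inner_e_left]
  simp [e, lp.single_apply, Pi.single_apply]

lemma ext_inner_e {u v : l2Z X} (h : ∀ q : X × ℤ, ⟪e q, u⟫_ℂ = ⟪e q, v⟫_ℂ) : u = v :=
  lp.ext <| funext fun q => by simpa only [inner_e_left] using h q

lemma inner_e_apply_of_apply_e_eq_smul {A : l2Z X →L[ℂ] l2Z X} {a : X × ℤ → ℂ}
    (hA : ∀ p, A (e p) = a p • e p) (p : X × ℤ) (u : l2Z X) :
    ⟪e p, A u⟫_ℂ = a p * ⟪e p, u⟫_ℂ := by
  have hadj : adjoint A (e p) = conj (a p) • e p := ext_inner_e fun q => by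
    rw [adjoint_inner_right, hA, inner_smul_left, inner_smul_right, inner_e_e]
    split_ifs with h
    · rw [h]
    · simp
  rw [← adjoint_inner_left, hadj, inner_smul_left, Complex.conj_conj]

end BasisVectors

section Ik

variable {X : Type*}

lemma Ik_nonneg (T : X → X) (k : ℕ) (x : X) : 0 ≤ Ik T k x :=
  Finset.prod_nonneg fun _ _ => Nat.cast_nonneg _

lemma Ik_succ (T : X → X) (k : ℕ) (x : X) :
    Ik T (k + 1) x = Ik T k (T x) * Nat.card (T ⁻¹' {T x}) := by
  simp only [Ik, Finset.prod_range_succ', Function.iterate_succ_apply]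
  rfl

end Ik

section PreimageShift

open ContinuousLinearMap

variable {X : Type*} {T : X → X} {St : l2Z X →L[ℂ] l2Z X}

/-- The defining property of the paper's `S̃`. -/
def IsPreimageShift (T : X → X) (St : l2Z X →L[ℂ] l2Z X) : Prop :=
  ∀ (x : X) (n : ℤ), St (e (x, n)) =
    (((Real.sqrt (Nat.card (T ⁻¹' {x})))⁻¹ : ℝ) : ℂ) • ∑ᶠ y ∈ T ⁻¹' {x}, e (y, n + 1)

lemma IsPreimageShift.inner_apply_e_e (hSt : IsPreimageShift T St) (x y : X) (m n : ℤ) :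
    ⟪St (e (y, m)), e (x, n)⟫_ℂ =
      (((Real.sqrt (Nat.card (T ⁻¹' {y})))⁻¹ : ℝ) : ℂ) * if T x = y ∧ n = m + 1 then 1 else 0 := by
  rw [hSt, inner_smul_left, Complex.conj_ofReal]
  rcases (T ⁻¹' {y}).finite_or_infinite with hfin | hinf
  · rw [finsum_mem_eq_finite_toFinset_sum _ hfin, sum_inner]
    simp [inner_e_e, Prod.ext_iff, ite_and, eq_comm]
  · -- an infinite fiber has `Nat.card = 0`, so both sides vanish
    have : Nat.card (T ⁻¹' {y}) = 0 := @Nat.card_eq_zero_of_infinite _ hinf.to_subtype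
    simp [this]

lemma IsPreimageShift.adjoint_apply_e (hSt : IsPreimageShift T St) (x : X) (n : ℤ) :
    adjoint St (e (x, n)) =
      (((Real.sqrt (Nat.card (T ⁻¹' {T x})))⁻¹ : ℝ) : ℂ) • e (T x, n - 1) := by
  refine ext_inner_e fun ⟨y, m⟩ => ?_
  rw [adjoint_inner_right, hSt.inner_apply_e_e, inner_smul_right, inner_e_e]
  by_cases h : T x = y ∧ n = m + 1
  · obtain ⟨rfl, rfl⟩ := h
    simp
  · rw [if_neg h, if_neg, mul_zero, mul_zero]
    intro hxn
    obtain ⟨rfl, rfl⟩ := Prod.ext_iff.mp hxn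
    exact h ⟨rfl, by omega⟩

lemma IsPreimageShift.adjoint_pow_apply_e (hSt : IsPreimageShift T St)
    (l : ℕ) (x : X) (n : ℤ) :
    (adjoint St ^ l) (e (x, n)) = (((Real.sqrt (Ik T l x))⁻¹ : ℝ) : ℂ) • e (T^[l] x, n - l) := by
  induction l generalizing x n with
  | zero => simp [Ik]
  | succ l ih =>
    rw [pow_succ, mul_apply_eq_comp, hSt.adjoint_apply_e, map_smul, ih, smul_smul,
      ← Complex.ofReal_mul, ← mul_inv, ← Real.sqrt_mul (Nat.cast_nonneg _), mul_comm, ← Ik_succ,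
      ← Function.iterate_succ_apply]
    congr 3
    push_cast
    ring

end PreimageShift

open ContinuousLinearMap in
theorem diagonal_matrix_entry_general {X : Type*} [TopologicalSpace X]
    (T : X → X)
    (St : l2Z X →L[ℂ] l2Z X)
    (hSt : ∀ (x : X) (n : ℤ), St (e (x, n)) =
      (((Real.sqrt (Nat.card (T ⁻¹' {x})))⁻¹ : ℝ) : ℂ) • ∑ᶠ y ∈ T ⁻¹' {x}, e (y, n + 1)) :
    ∀ f g : C(X, ℂ), ∀ Mf Mg : l2Z X →L[ℂ] l2Z X,
      (∀ p : X × ℤ, Mf (e p) = f p.1 • e p) →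
      (∀ p : X × ℤ, Mg (e p) = g p.1 • e p) →
      ∀ (k l : ℕ) (x : X) (n : ℤ),
        @inner ℂ _ _ (e (x, n))
            ((Mf ∘L (St ^ k) ∘L ((adjoint St) ^ l) ∘L Mg) (e (x, n))) =
          (if k = l then 1 else 0) * f x * ((Ik T k x : ℝ) : ℂ)⁻¹ * g x := by
  intro f g Mf Mg hMf hMg k l x n
  have hS : IsPreimageShift T St := hSt
  calc _ = f x * g x * ⟪(adjoint St ^ k) (e (x, n)), (adjoint St ^ l) (e (x, n))⟫_ℂ := by
        rw [comp_apply, inner_e_apply_of_apply_e_eq_smul (a := fun p => f p.1) hMf, comp_apply,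
          comp_apply, hMg, map_smul, map_smul, inner_smul_right, ← adjoint_inner_left,
          ← star_eq_adjoint, star_pow, star_eq_adjoint, mul_assoc]
    _ = _ := by
      rw [hS.adjoint_pow_apply_e, hS.adjoint_pow_apply_e, inner_smul_left, inner_smul_right,
        inner_e_e, Complex.conj_ofReal]
      by_cases hkl : k = l
      · subst hkl
        have hsq : (Real.sqrt (Ik T k x))⁻¹ * (Real.sqrt (Ik T k x))⁻¹ = (Ik T k x)⁻¹ := by
          rw [← mul_inv, Real.mul_self_sqrt (Ik_nonneg T k x)]
        rw [if_pos rfl, if_pos rfl, ← Complex.ofReal_inv, ← hsq]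
        push_cast
        ring
      · have hne : (T^[k] x, n - (k : ℤ)) ≠ (T^[l] x, n - l) := fun h => hkl <| by
          have := congrArg Prod.snd h
          omega
        simp [hkl, hne]

open ContinuousLinearMap in
/-- Let `X` be a compact Hausdorff space, `T : X → X` a covering map and
`S̃` the bounded operator on `ℓ²(X×ℤ)` with
`S̃ e_{(x,n)} = (ℒ(1)(x))^{-1/2} ∑_{y ∈ T⁻¹({x})} e_{(y,n+1)}`. For all continuous
`f, g : X → ℂ`, all `k, l ∈ ℕ` and every `(x,n) ∈ X×ℤ` one has
`⟨M̃_f S̃^k (S̃*)^l M̃_g e_{(x,n)}, e_{(x,n)}⟩ = δ_{k,l}·f(x)·(I_k(x))⁻¹·g(x)`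
(the paper's inner product is linear in the first variable, so it is here rendered as
Mathlib's `inner` with the arguments swapped). -/
theorem diagonal_matrix_entry {X : Type*} [TopologicalSpace X] [CompactSpace X] [T2Space X]
    (T : X → X) (hT : IsCoveringMap T) (hTsurj : Function.Surjective T)
    (St : l2Z X →L[ℂ] l2Z X)
    (hSt : ∀ (x : X) (n : ℤ), St (e (x, n)) =
      (((Real.sqrt (Nat.card (T ⁻¹' {x})))⁻¹ : ℝ) : ℂ) • ∑ᶠ y ∈ T ⁻¹' {x}, e (y, n + 1)) :
    ∀ f g : C(X, ℂ), ∀ Mf Mg : l2Z X →L[ℂ] l2Z X,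
      (∀ p : X × ℤ, Mf (e p) = f p.1 • e p) →
      (∀ p : X × ℤ, Mg (e p) = g p.1 • e p) →
      ∀ (k l : ℕ) (x : X) (n : ℤ),
        @inner ℂ _ _ (e (x, n))
            ((Mf ∘L (St ^ k) ∘L ((adjoint St) ^ l) ∘L Mg) (e (x, n))) =
          (if k = l then 1 else 0) * f x * ((Ik T k x : ℝ) : ℂ)⁻¹ * g x :=
  diagonal_matrix_entry_general T St hSt
end

section
/- Let k, l be natural numbers, let U be an open subset of X such that T^k(x) = T^l(x) for every x ∈ U and such that the restrictions of T^k and T^l to U are injective, and let f : X → ℂ be a continuous function whose support is contained in U. Then the operator M̃_f S̃^k (S̃*)^l M̃_f commutes with M̃_h for every continuous function h : X → ℂ. -/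
open Classical

/-!
Put `σ (x, n) = (T x, n - 1)`. The matrix of `S̃` is supported on the pairs `(σ q, q)`, so
`(S̃*)^m` maps `e p` to a multiple of `e (σ^[m] p)`, and the entry
`⟪e q, S̃^k (S̃*)^l e p⟫ = ⟪(S̃*)^k e q, (S̃*)^l e p⟫` vanishes unless `T^[k] q.1 = T^[l] p.1`.
The factors `f q.1 * f p.1` of the corresponding entry of `M̃_f S̃^k (S̃*)^l M̃_f` put `p.1`
and `q.1` in `U`, where `T^[k] q.1 = T^[l] p.1 = T^[k] p.1` forces `q.1 = p.1`. An operator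
whose matrix only links basis vectors with the same `X`-coordinate commutes with every
diagonal operator `M̃_h`.
-/

open scoped InnerProductSpace lp ComplexConjugate
open ContinuousLinearMap

section SingleCoordinates

variable {ι 𝕜 : Type*} [RCLike 𝕜] [DecidableEq ι]

theorem lp.eq_smul_single_of_apply_eq_zero {v : ℓ²(ι, 𝕜)} {i : ι} (hv : ∀ j ≠ i, v j = 0) :
    v = v i • lp.single 2 i 1 := by
  ext j
  by_cases hj : j = i
  · subst hj; simp
  · simp [hv j hj, Pi.single_eq_of_ne hj]

theorem lp.inner_single_one_left (i : ι) (v : ℓ²(ι, 𝕜)) : ⟪lp.single 2 i (1 : 𝕜), v⟫_𝕜 = v i := by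
  simp [lp.inner_single_left]

theorem ContinuousLinearMap.ext_lp_single_one {F : Type*} [AddCommMonoid F] [Module 𝕜 F]
    [TopologicalSpace F] [T2Space F] {A B : ℓ²(ι, 𝕜) →L[𝕜] F}
    (h : ∀ i, A (lp.single 2 i 1) = B (lp.single 2 i 1)) : A = B :=
  lp.ext_continuousLinearMap ENNReal.ofNat_ne_top fun i => ext_ring (h i)

theorem adjoint_apply_single_of_apply_eq_zero {A : ℓ²(ι, 𝕜) →L[𝕜] ℓ²(ι, 𝕜)} {i j : ι}
    (h : ∀ j' ≠ j, A (lp.single 2 j' 1) i = 0) :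
    adjoint A (lp.single 2 i 1) = conj (A (lp.single 2 j 1) i) • lp.single 2 j 1 := by
  have hcoord : ∀ j', adjoint A (lp.single 2 i 1) j' = conj (A (lp.single 2 j' 1) i) := by
    intro j'
    rw [← lp.inner_single_one_left, adjoint_inner_right, ← inner_conj_symm,
      lp.inner_single_one_left]
  rw [lp.eq_smul_single_of_apply_eq_zero (v := adjoint A (lp.single 2 i 1))
    fun j' hj' => by rw [hcoord, h j' hj', map_zero], hcoord]

theorem diagonal_apply_eq_mul {M : ℓ²(ι, 𝕜) →L[𝕜] ℓ²(ι, 𝕜)} {g : ι → 𝕜}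
    (hM : ∀ i, M (lp.single 2 i 1) = g i • lp.single 2 i 1) (v : ℓ²(ι, 𝕜)) (i : ι) :
    M v i = g i * v i := by
  have hadj : adjoint M (lp.single 2 i 1) = conj (g i) • lp.single 2 i 1 := by
    rw [adjoint_apply_single_of_apply_eq_zero (j := i) fun j hj => by
      simp [hM, Pi.single_eq_of_ne hj.symm]]
    simp [hM]
  rw [← lp.inner_single_one_left, ← adjoint_inner_left, hadj, inner_smul_left,
    lp.inner_single_one_left, RCLike.conj_conj]

theorem comp_diagonal_eq_diagonal_comp {A M : ℓ²(ι, 𝕜) →L[𝕜] ℓ²(ι, 𝕜)} {g : ι → 𝕜}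
    (hM : ∀ i, M (lp.single 2 i 1) = g i • lp.single 2 i 1)
    (hA : ∀ i j, A (lp.single 2 i 1) j ≠ 0 → g j = g i) : A ∘L M = M ∘L A := by
  refine ext_lp_single_one fun i => lp.ext <| funext fun j => ?_
  rw [comp_apply, comp_apply, hM, map_smul, lp.coeFn_smul, Pi.smul_apply, smul_eq_mul,
    diagonal_apply_eq_mul hM]
  by_cases hj : A (lp.single 2 i 1) j = 0
  · simp [hj]
  · rw [hA i j hj]

theorem adjoint_pow_apply_single {S : ℓ²(ι, 𝕜) →L[𝕜] ℓ²(ι, 𝕜)} {σ : ι → ι}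
    (hS : ∀ i j, S (lp.single 2 i 1) j ≠ 0 → σ j = i) (m : ℕ) (i : ι) :
    ∃ a : 𝕜, (adjoint S ^ m) (lp.single 2 i 1) = a • lp.single 2 (σ^[m] i) 1 := by
  induction m generalizing i with
  | zero => exact ⟨1, by simp⟩
  | succ m ih =>
    obtain ⟨a, ha⟩ := ih (σ i)
    refine ⟨a * conj (S (lp.single 2 (σ i) 1) i), ?_⟩
    rw [pow_succ, mul_apply_eq_comp, adjoint_apply_single_of_apply_eq_zero fun j hj => ?_,
      map_smul, ha, smul_smul, Function.iterate_succ_apply, mul_comm]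
    by_contra h
    exact hj (hS j i h).symm

theorem iterate_eq_of_pow_adjoint_pow_apply_single_ne_zero {S : ℓ²(ι, 𝕜) →L[𝕜] ℓ²(ι, 𝕜)}
    {σ : ι → ι} (hS : ∀ i j, S (lp.single 2 i 1) j ≠ 0 → σ j = i) {k l : ℕ} {i j : ι}
    (h : (S ^ k) ((adjoint S ^ l) (lp.single 2 i 1)) j ≠ 0) : σ^[k] j = σ^[l] i := by
  obtain ⟨a, ha⟩ := adjoint_pow_apply_single hS k j
  obtain ⟨b, hb⟩ := adjoint_pow_apply_single hS l i
  rw [← lp.inner_single_one_left, ← adjoint_inner_left, ← star_eq_adjoint, star_pow,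
    star_eq_adjoint, ha, hb, inner_smul_left, inner_smul_right, lp.inner_single_one_left] at h
  by_contra hne
  exact h (by rw [lp.single_apply_ne 2 _ _ hne, mul_zero, mul_zero])

end SingleCoordinates

theorem prodMap_eq_of_apply_e_apply_ne_zero {X : Type*} {T : X → X} {St : l2Z X →L[ℂ] l2Z X}
    {w : X → ℂ} (hSt : ∀ (x : X) (n : ℤ), St (e (x, n)) = w x • ∑ᶠ y ∈ T ⁻¹' {x}, e (y, n + 1))
    {p q : X × ℤ} (h : St (e p) q ≠ 0) : Prod.map T (· - 1) q = p := by
  obtain ⟨x, n⟩ := p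
  contrapose! h
  rw [hSt, lp.coeFn_smul, Pi.smul_apply, smul_eq_mul]
  refine mul_eq_zero_of_right _ (finsum_mem_induction (fun v : l2Z X => v q = 0) rfl
    (fun u v hu hv => by rw [lp.coeFn_add, Pi.add_apply, hu, hv, add_zero]) fun y hy => ?_)
  refine lp.single_apply_ne 2 _ _ fun hq => h ?_
  rw [hq, Prod.map_apply, hy, add_sub_cancel_right]

open ContinuousLinearMap in
theorem MfSkSlMf_commutes_with_Mh_general {X : Type*} [TopologicalSpace X] (T : X → X)
    (St : l2Z X →L[ℂ] l2Z X)
    (hSt : ∀ (x : X) (n : ℤ), St (e (x, n)) =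
      (((Real.sqrt (Nat.card (T ⁻¹' {x})))⁻¹ : ℝ) : ℂ) • ∑ᶠ y ∈ T ⁻¹' {x}, e (y, n + 1))
    (k l : ℕ) (U : Set X)
    (hU : ∀ x ∈ U, T^[k] x = T^[l] x)
    (hUinjk : Set.InjOn (T^[k]) U)
    (f : C(X, ℂ)) (hf : tsupport f ⊆ U) :
    ∀ h : C(X, ℂ), ∀ Mf Mh : l2Z X →L[ℂ] l2Z X,
      (∀ p : X × ℤ, Mf (e p) = f p.1 • e p) →
      (∀ p : X × ℤ, Mh (e p) = h p.1 • e p) →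
      (Mf ∘L (St ^ k) ∘L ((adjoint St) ^ l) ∘L Mf) ∘L Mh =
        Mh ∘L (Mf ∘L (St ^ k) ∘L ((adjoint St) ^ l) ∘L Mf) := by
  intro h Mf Mh hMf hMh
  simp only [e] at hMf hMh
  refine comp_diagonal_eq_diagonal_comp (g := fun p => h p.1) hMh
    fun p q hpq => congrArg h ?_
  rw [comp_apply, comp_apply, comp_apply, diagonal_apply_eq_mul (g := fun p => f p.1) hMf,
    hMf, map_smul, map_smul, lp.coeFn_smul, Pi.smul_apply, smul_eq_mul, mul_ne_zero_iff,
    mul_ne_zero_iff] at hpq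
  obtain ⟨hfq, hfp, hS⟩ := hpq
  have hpU : p.1 ∈ U := hf (subset_tsupport f hfp)
  have hqU : q.1 ∈ U := hf (subset_tsupport f hfq)
  have hTq : T^[k] q.1 = T^[l] p.1 := by
    simpa using congrArg Prod.fst <| iterate_eq_of_pow_adjoint_pow_apply_single_ne_zero
      (fun _ _ => prodMap_eq_of_apply_e_apply_ne_zero hSt) hS
  exact hUinjk hqU hpU (hTq.trans (hU p.1 hpU).symm)

open ContinuousLinearMap in
/-- Let `X` be a compact Hausdorff space, `T : X → X` a covering map and
`S̃` the bounded operator on `ℓ²(X×ℤ)` with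
`S̃ e_{(x,n)} = (ℒ(1)(x))^{-1/2} ∑_{y ∈ T⁻¹({x})} e_{(y,n+1)}`. Let `k, l ∈ ℕ`, let `U` be
open with `T^k = T^l` on `U` and `T^k`, `T^l` injective on `U`, and let `f : X → ℂ` be
continuous with support contained in `U`. Then `M̃_f S̃^k (S̃*)^l M̃_f` commutes with
`M̃_h` for every continuous `h : X → ℂ`. -/
theorem MfSkSlMf_commutes_with_Mh {X : Type*} [TopologicalSpace X] [CompactSpace X]
    [T2Space X] (T : X → X) (hT : IsCoveringMap T) (hTsurj : Function.Surjective T)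
    (St : l2Z X →L[ℂ] l2Z X)
    (hSt : ∀ (x : X) (n : ℤ), St (e (x, n)) =
      (((Real.sqrt (Nat.card (T ⁻¹' {x})))⁻¹ : ℝ) : ℂ) • ∑ᶠ y ∈ T ⁻¹' {x}, e (y, n + 1))
    (k l : ℕ) (U : Set X) (hUopen : IsOpen U)
    (hU : ∀ x ∈ U, T^[k] x = T^[l] x)
    (hUinjk : Set.InjOn (T^[k]) U) (hUinjl : Set.InjOn (T^[l]) U)
    (f : C(X, ℂ)) (hf : tsupport f ⊆ U) :
    ∀ h : C(X, ℂ), ∀ Mf Mh : l2Z X →L[ℂ] l2Z X,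
      (∀ p : X × ℤ, Mf (e p) = f p.1 • e p) →
      (∀ p : X × ℤ, Mh (e p) = h p.1 • e p) →
      (Mf ∘L (St ^ k) ∘L ((adjoint St) ^ l) ∘L Mf) ∘L Mh =
        Mh ∘L (Mf ∘L (St ^ k) ∘L ((adjoint St) ^ l) ∘L Mf) :=
  MfSkSlMf_commutes_with_Mh_general T St hSt k l U hU hUinjk f hf
end
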